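/- For an integer k ≥ 3, if a graph G is k-chordal then G has a k-simplicial ordering, i.e., an ordering v_1, …, v_n of its vertices such that each v_i is k-simplicial in the induced subgraph G[{v_i, …, v_n}]. -/

import Mathlib

/-!
Condition (C2) holds at every vertex of a `k`-chordal graph: an induced path between two
non-adjacent neighbours of `v` whose inner vertices avoid `N[v]` closes up with `v` into an
induced cycle. As `k`-chordality passes to induced subgraphs, it remains to find a vertex
satisfying (C1) in every nonempty finite `k`-chordal graph, and to eliminate such vertices one
after the other.

In a complete graph any vertex works. Otherwise take a maximal connected non-dominating set `A`;
by maximality every vertex of `N(A)` is adjacent to every vertex beyond `N[A]`. If some vertex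
beyond `N[A]` is adjacent to all other vertices outside `A`, then two non-adjacent neighbours
of it both lie in `N(A)`, and an induced path between them through `A` is short by the cycle
argument above. If not, recurse into `G - A` from a singleton `{d}` beyond `N[A]`: the vertex
found there is not adjacent to `d`, hence lies beyond `N[A]`, so all its neighbours avoid `A`
and (C1) lifts to `G`.
-/

open SimpleGraph

variable {V : Type*}

/-- Open neighbourhood of a set of vertices. -/
def setNbhd (G : SimpleGraph V) (A : Set V) : Set V :=
  {x | x ∉ A ∧ ∃ a ∈ A, G.Adj a x}

/-- Closed neighbourhood of a set of vertices. -/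
def closedNbhd (G : SimpleGraph V) (A : Set V) : Set V :=
  A ∪ setNbhd G A

/-- `A` is a connected non-dominating set: `G[A]` is connected and `N[A] ⊊ V`. -/
def ConnNonDom (G : SimpleGraph V) (A : Set V) : Prop :=
  (G.induce A).Connected ∧ closedNbhd G A ≠ Set.univ

/-- `A` is a maximal connected non-dominating set. -/
def MaxConnNonDom (G : SimpleGraph V) (A : Set V) : Prop :=
  ConnNonDom G A ∧ ∀ A' : Set V, A ⊆ A' → ConnNonDom G A' → A' = A

/-- `G` is not complete. -/
def NonComplete (G : SimpleGraph V) : Prop :=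
  ∃ u v : V, u ≠ v ∧ ¬ G.Adj u v

/-- A chordless (induced) path. -/
def IsInducedPath (G : SimpleGraph V) {x y : V} (p : G.Walk x y) : Prop :=
  p.IsPath ∧ ∀ u w : V, u ∈ p.support → w ∈ p.support → G.Adj u w → s(u, w) ∈ p.edges

/-- A chordless (induced) cycle. -/
def IsInducedCycle (G : SimpleGraph V) {v : V} (c : G.Walk v v) : Prop :=
  c.IsCycle ∧ ∀ u w : V, u ∈ c.support → w ∈ c.support → G.Adj u w → s(u, w) ∈ c.edges

/-- `G` is `k`-chordal: no induced cycle of length greater than `k`. -/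
def KChordal (G : SimpleGraph V) (k : ℕ) : Prop :=
  ∀ ⦃v : V⦄ (c : G.Walk v v), IsInducedCycle G c → c.length ≤ k

/-- `u` is an internal vertex of the path `p`. -/
def InternalVert (G : SimpleGraph V) {x y : V} (p : G.Walk x y) (u : V) : Prop :=
  u ∈ p.support ∧ u ≠ x ∧ u ≠ y

/-- Condition (C1): any two distinct neighbours of `v` are at distance at most `k-2`
in `G - v`. -/
def SimpC1 (G : SimpleGraph V) (k : ℕ) (v : V) : Prop :=
  ∀ x y : V, G.Adj v x → G.Adj v y → x ≠ y →
    ∃ (hx : x ≠ v) (hy : y ≠ v)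
      (p : (G.induce {u : V | u ≠ v}).Walk ⟨x, hx⟩ ⟨y, hy⟩), p.length ≤ k - 2

/-- Condition (C2): every induced path between non-adjacent neighbours of `v` whose
internal vertices avoid `N[v]` has at most `k-2` edges. -/
def SimpC2 (G : SimpleGraph V) (k : ℕ) (v : V) : Prop :=
  ∀ x y : V, G.Adj v x → G.Adj v y → ¬ G.Adj x y → x ≠ y →
    ∀ p : G.Walk x y, IsInducedPath G p →
      (∀ u : V, InternalVert G p u → u ≠ v ∧ ¬ G.Adj v u) →
      p.length ≤ k - 2

/-- `v` is `k`-simplicial in `G`. -/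
def KSimplicial (G : SimpleGraph V) (k : ℕ) (v : V) : Prop :=
  SimpC1 G k v ∧ SimpC2 G k v

/-- Vertices at position `≥ i` in the ordering `σ`. -/
def laterSet {V : Type*} [Fintype V] (σ : Fin (Fintype.card V) ≃ V)
    (i : Fin (Fintype.card V)) : Set V := {w | i ≤ σ.symm w}

/-- `σ` is a `k`-simplicial ordering of the vertices of `G`. -/
def KSimplicialOrdering {V : Type*} [Fintype V] (G : SimpleGraph V) (k : ℕ)
    (σ : Fin (Fintype.card V) ≃ V) : Prop :=
  ∀ i : Fin (Fintype.card V),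
    KSimplicial (G.induce (laterSet σ i)) k ⟨σ i, by simp [laterSet]⟩

/-- `S` separates `a` from `b`. -/
def IsSeparator (G : SimpleGraph V) (a b : V) (S : Set V) : Prop :=
  a ∉ S ∧ b ∉ S ∧ ∀ p : G.Walk a b, ∃ s ∈ S, s ∈ p.support

/-- `S` is a minimal `(a,b)`-vertex separator. -/
def IsMinSeparator (G : SimpleGraph V) (a b : V) (S : Set V) : Prop :=
  IsSeparator G a b S ∧ ∀ T : Set V, T ⊂ S → ¬ IsSeparator G a b T

/-- `S` is a minimal vertex separator of `G`. -/
def IsMinVertexSeparator (G : SimpleGraph V) (S : Set V) : Prop :=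
  ∃ a b : V, a ≠ b ∧ ¬ G.Adj a b ∧ IsMinSeparator G a b S

/-- `u` lies in the connected component `c` of `G - S`. -/
def InComponent (G : SimpleGraph V) (S : Set V)
    (c : (G.induce Sᶜ).ConnectedComponent) (u : V) : Prop :=
  ∃ h : u ∈ Sᶜ, (G.induce Sᶜ).connectedComponentMk ⟨u, h⟩ = c

/-- `v` is 3-simplicial: its neighbourhood is a clique. -/
def Simplicial3 (G : SimpleGraph V) (v : V) : Prop :=
  ∀ x y : V, G.Adj v x → G.Adj v y → x ≠ y → G.Adj x y

section InducedWalks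

variable {G : SimpleGraph V} {W : Type*} {G' : SimpleGraph W}

lemma isInducedPath_iff {x y : V} {p : G.Walk x y} :
    IsInducedPath G p ↔ p.IsPath ∧ p.IsChordless := by
  rw [Walk.isChordless_iff_forall_mem_edges]
  rfl

lemma isInducedCycle_iff {v : V} {c : G.Walk v v} :
    IsInducedCycle G c ↔ c.IsCycle ∧ c.IsChordless := by
  rw [Walk.isChordless_iff_forall_mem_edges]
  rfl

lemma SimpleGraph.Walk.IsChordless.map (f : G ↪g G') {x y : V} {p : G.Walk x y}
    (hp : p.IsChordless) : (p.map f.toHom).IsChordless := by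
  rw [Walk.isChordless_iff_forall_mem_edges] at hp ⊢
  intro a b ha hb hab
  simp only [Walk.support_map, List.mem_map] at ha hb
  obtain ⟨a, ha, rfl⟩ := ha
  obtain ⟨b, hb, rfl⟩ := hb
  simpa [Walk.edges_map] using
    List.mem_map_of_mem (f := Sym2.map f) (hp ha hb (f.map_adj_iff.mp hab))

lemma IsInducedPath.map (f : G ↪g G') {x y : V} {p : G.Walk x y} (hp : IsInducedPath G p) :
    IsInducedPath G' (p.map f.toHom) := by
  rw [isInducedPath_iff] at hp ⊢
  exact ⟨hp.1.map f.injective, hp.2.map f⟩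

lemma IsInducedCycle.map (f : G ↪g G') {v : V} {c : G.Walk v v} (hc : IsInducedCycle G c) :
    IsInducedCycle G' (c.map f.toHom) := by
  rw [isInducedCycle_iff] at hc ⊢
  exact ⟨hc.1.map f.injective, hc.2.map f⟩

lemma SimpleGraph.Walk.mem_edges_of_length_eq_one {x y : V} {p : G.Walk x y}
    (hp : p.length = 1) : s(x, y) ∈ p.edges := by
  cases p with
  | nil => simp at hp
  | cons h q => cases q with
    | nil => simp
    | cons _ _ => simp at hp

lemma SimpleGraph.Walk.isChordless_of_length_eq_dist {x y : V} {p : G.Walk x y}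
    (hp : p.length = G.dist x y) : p.IsChordless := by
  classical
  have edge_mem {a b : V} (q : G.Walk a b) (hq : q.IsSubwalk p) (hab : G.Adj a b) :
      s(a, b) ∈ p.edges :=
    hq.edges_subset <| mem_edges_of_length_eq_one <|
      (length_eq_dist_of_subwalk hp hq).trans (dist_eq_one_iff_adj.mpr hab)
  refine isChordless_iff_forall_mem_edges.mpr fun a b ha hb hab => ?_
  rw [← p.take_spec ha, mem_support_append_iff] at hb
  rcases hb with hb | hb
  · rw [Sym2.eq_swap]
    exact edge_mem _ (((p.takeUntil a ha).isSubwalk_dropUntil hb).trans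
      (p.isSubwalk_takeUntil ha)) hab.symm
  · exact edge_mem _ (((p.dropUntil a ha).isSubwalk_takeUntil hb).trans
      (p.isSubwalk_dropUntil ha)) hab

lemma KChordal.induce {k : ℕ} (h : KChordal G k) (s : Set V) : KChordal (G.induce s) k :=
  fun _ c hc => c.length_map (Embedding.induce s).toHom ▸ h _ (hc.map (Embedding.induce s))

end InducedWalks

section ConnNonDom

variable {G : SimpleGraph V} {A B : Set V}

lemma closedNbhd_mono (h : A ⊆ B) : closedNbhd G A ⊆ closedNbhd G B := by
  rintro z (hz | ⟨-, a, ha, haz⟩)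
  · exact Or.inl (h hz)
  · by_cases hzB : z ∈ B
    · exact Or.inl hzB
    · exact Or.inr ⟨hzB, a, h ha, haz⟩

lemma not_adj_of_notMem_closedNbhd {a d : V} (hd : d ∉ closedNbhd G A) (ha : a ∈ A) :
    ¬G.Adj a d :=
  fun had => hd (Or.inr ⟨fun hdA => hd (Or.inl hdA), a, ha, had⟩)

lemma connNonDom_singleton {d u : V} (hne : u ≠ d) (hadj : ¬G.Adj d u) : ConnNonDom G {d} := by
  refine ⟨(G.induce_singleton_eq_top d).symm ▸ connected_top, fun huniv => ?_⟩
  rcases huniv.symm ▸ Set.mem_univ u with hu | ⟨-, a, rfl, hau⟩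
  · exact hne hu
  · exact hadj hau

lemma ConnNonDom.exists_maxConnNonDom [Finite V] (hA : ConnNonDom G A) :
    ∃ B, A ⊆ B ∧ MaxConnNonDom G B := by
  obtain ⟨B, ⟨hAB, hB⟩, hmax⟩ := Set.Finite.exists_maximalFor id
    {B : Set V | A ⊆ B ∧ ConnNonDom G B} (Set.toFinite _) ⟨A, subset_rfl, hA⟩
  exact ⟨B, hAB, hB, fun B' hBB' hB' => (hmax ⟨hAB.trans hBB', hB'⟩ hBB').antisymm hBB'⟩

/-- Adding a neighbour `w` of a maximal `A` keeps it connected, so it must dominate. -/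
lemma MaxConnNonDom.adj {w d : V} (hmax : MaxConnNonDom G A) (hw : w ∈ setNbhd G A)
    (hd : d ∉ closedNbhd G A) : G.Adj w d := by
  obtain ⟨⟨hconn, -⟩, hmax⟩ := hmax
  obtain ⟨hwA, a, ha, haw⟩ := hw
  have hconn' : (G.induce (A ∪ {w})).Connected :=
    connected_induce_union hconn.preconnected (Preconnected.of_subsingleton) ha rfl haw
  have hdom : closedNbhd G (A ∪ {w}) = Set.univ := by
    by_contra hnd
    exact hwA (hmax _ Set.subset_union_left ⟨hconn', hnd⟩ ▸ Or.inr rfl)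
  rcases hdom.symm ▸ Set.mem_univ d with (hdA | rfl) | ⟨-, z, hzA | rfl, hzd⟩
  · exact absurd (Or.inl hdA) hd
  · exact absurd (Or.inr ⟨hwA, a, ha, haw⟩) hd
  · exact absurd hzd (not_adj_of_notMem_closedNbhd hd hzA)
  · exact hzd

end ConnNonDom

section Paths

variable {G : SimpleGraph V} {A : Set V}

lemma SimpleGraph.Connected.exists_isInducedPath_of_induce {s : Set V}
    (hs : (G.induce s).Connected) {x y : V} (hx : x ∈ s) (hy : y ∈ s) :
    ∃ P : G.Walk x y, IsInducedPath G P ∧ ∀ u ∈ P.support, u ∈ s := by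
  obtain ⟨q, hq⟩ := hs.exists_walk_length_eq_dist ⟨x, hx⟩ ⟨y, hy⟩
  have hPs : ∀ u ∈ (q.map (Embedding.induce s).toHom).support, u ∈ s := by
    intro u hu
    rw [Walk.support_map, List.mem_map] at hu
    obtain ⟨u, -, rfl⟩ := hu
    exact u.2
  exact ⟨_, IsInducedPath.map _ (isInducedPath_iff.mpr
    ⟨q.isPath_of_length_eq_dist hq, q.isChordless_of_length_eq_dist hq⟩), hPs⟩

lemma exists_isInducedPath_of_mem_setNbhd (hA : (G.induce A).Connected) {x y : V}
    (hx : x ∈ setNbhd G A) (hy : y ∈ setNbhd G A) :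
    ∃ P : G.Walk x y, IsInducedPath G P ∧ ∀ u ∈ P.support, u = x ∨ u = y ∨ u ∈ A := by
  obtain ⟨-, a, ha, hax⟩ := hx
  obtain ⟨-, b, hb, hby⟩ := hy
  have hyA : (G.induce ({y} ∪ A)).Connected :=
    connected_induce_union .of_subsingleton hA.preconnected (Set.mem_singleton y) hb hby.symm
  have hxyA : (G.induce ({x} ∪ ({y} ∪ A))).Connected :=
    connected_induce_union .of_subsingleton hyA.preconnected (Set.mem_singleton x)
      (Set.mem_union_right _ ha) hax.symm
  obtain ⟨P, hP, hPs⟩ := hxyA.exists_isInducedPath_of_induce (x := x) (y := y)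
    (.inl (Set.mem_singleton x)) (.inr (.inl (Set.mem_singleton y)))
  exact ⟨P, hP, fun u hu => by simpa [or_left_comm] using hPs u hu⟩

end Paths

section Simplicial

variable {G : SimpleGraph V} {k : ℕ}

lemma SimpleGraph.Walk.length_induce (s : Set V) {x y : V} (p : G.Walk x y)
    (hp : ∀ u ∈ p.support, u ∈ s) : (p.induce s hp).length = p.length := by
  rw [← Walk.length_map (Embedding.induce s).toHom (p.induce s hp)]
  exact congrArg Walk.length (p.map_induce hp)

lemma simpC1_iff {v : V} :
    SimpC1 G k v ↔ ∀ x y, G.Adj v x → G.Adj v y → x ≠ y →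
      ∃ p : G.Walk x y, v ∉ p.support ∧ p.length ≤ k - 2 := by
  refine forall₄_congr fun x y hvx hvy => imp_congr_right fun _ => ⟨?_, ?_⟩
  · rintro ⟨hx, hy, p, hp⟩
    have hv : v ∉ (p.map (Embedding.induce {u | u ≠ v}).toHom).support := by
      rw [Walk.support_map, List.mem_map]
      rintro ⟨u, -, hu⟩
      exact u.2 hu
    exact ⟨_, hv, (p.length_map _).trans_le hp⟩
  · rintro ⟨p, hv, hp⟩
    have hs : ∀ u ∈ p.support, u ∈ {u | u ≠ v} := fun u hu huv => hv (huv ▸ hu)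
    exact ⟨hvx.ne', hvy.ne', p.induce _ hs, (p.length_induce _ hs).trans_le hp⟩

lemma SimpC1.of_induce {s : Set V} {v : s} (hs : ∀ x, G.Adj v x → x ∈ s)
    (h : SimpC1 (G.induce s) k v) : SimpC1 G k v := by
  rw [simpC1_iff] at h ⊢
  intro x y hvx hvy hxy
  obtain ⟨p, hv, hp⟩ := h ⟨x, hs x hvx⟩ ⟨y, hs y hvy⟩ hvx hvy (fun h => hxy congr($h.1))
  have hv' : (v : V) ∉ (p.map (Embedding.induce s).toHom).support := by
    rw [Walk.support_map, List.mem_map]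
    rintro ⟨u, hu, huv⟩
    exact hv (Subtype.ext huv ▸ hu)
  exact ⟨_, hv', (p.length_map _).trans_le hp⟩

lemma KChordal.length_le_of_isInducedPath (hch : KChordal G k) {v x y : V} (hvx : G.Adj v x)
    (hvy : G.Adj v y) (hxy : ¬G.Adj x y) (hne : x ≠ y) {P : G.Walk x y}
    (hP : IsInducedPath G P) (hint : ∀ u ∈ P.support, u ≠ x → u ≠ y → u ≠ v ∧ ¬G.Adj v u) :
    P.length ≤ k - 2 := by
  have hvP : v ∉ P.support := fun hv => (hint v hv hvx.ne hvy.ne).1 rfl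
  have hnbr : ∀ u ∈ P.support, G.Adj v u → u = x ∨ u = y := fun u hu hvu => by
    by_contra! h
    exact (hint u hu h.1 h.2).2 hvu
  let c := Walk.cons hvx (P.concat hvy.symm)
  have hcycle : c.IsCycle := by
    refine (Walk.cons_isCycle_iff _ _).mpr ⟨hP.1.concat hvP hvy.symm, fun h => ?_⟩
    rw [Walk.edges_concat, List.concat_eq_append, List.mem_append, List.mem_singleton,
      Sym2.eq_iff] at h
    rcases h with h | ⟨rfl, -⟩ | ⟨-, rfl⟩
    exacts [hvP (P.fst_mem_support_of_mem_edges h), hvy.ne rfl, hne rfl]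
  have hchordless : c.IsChordless := by
    rw [Walk.isChordless_iff_forall_mem_edges]
    intro a b ha hb hab
    have hsupp : ∀ z ∈ c.support, z = v ∨ z ∈ P.support := by
      simp only [c, Walk.support_cons, Walk.support_concat, List.mem_cons, List.mem_append]
      tauto
    simp only [c, Walk.edges_cons, Walk.edges_concat, List.concat_eq_append, List.mem_cons,
      List.mem_append]
    rcases hsupp a ha with rfl | haP <;> rcases hsupp b hb with rfl | hbP
    · exact absurd rfl hab.ne
    · rcases hnbr b hbP hab with rfl | rfl <;> simp
    · rcases hnbr a haP hab.symm with rfl | rfl <;> simp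
    · exact Or.inr (Or.inl (hP.2 a b haP hbP hab))
  have hlen : c.length = P.length + 2 := by simp [c]
  have := hch c (isInducedCycle_iff.mpr ⟨hcycle, hchordless⟩)
  omega

lemma KChordal.simpC2 (hch : KChordal G k) (v : V) : SimpC2 G k v :=
  fun _ _ hvx hvy hxy hne _ hP hint =>
    hch.length_le_of_isInducedPath hvx hvy hxy hne hP fun u hu hux huy => hint u ⟨hu, hux, huy⟩

end Simplicial

section Existence

variable {k : ℕ}

lemma exists_short_walk_of_adj {G : SimpleGraph V} (hk : 3 ≤ k) {v x y : V} (hvx : G.Adj v x)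
    (hvy : G.Adj v y) (hxy : G.Adj x y) :
    ∃ p : G.Walk x y, v ∉ p.support ∧ p.length ≤ k - 2 :=
  ⟨hxy.toWalk, by simp [hvx.ne, hvy.ne], by simp only [Adj.length_toWalk]; omega⟩

lemma KChordal.simpC1_of_forall_adj {G : SimpleGraph V} {A : Set V} (hk : 3 ≤ k)
    (hch : KChordal G k) (hA : (G.induce A).Connected)
    (hD : ∀ d ∉ closedNbhd G A, ∀ u ∉ A, u ≠ d → G.Adj d u) {d : V}
    (hd : d ∉ closedNbhd G A) : SimpC1 G k d := by
  rw [simpC1_iff]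
  intro x y hdx hdy hxy
  have hxA : x ∉ A := fun h => not_adj_of_notMem_closedNbhd hd h hdx.symm
  have hyA : y ∉ A := fun h => not_adj_of_notMem_closedNbhd hd h hdy.symm
  by_cases hadj : G.Adj x y
  · exact exists_short_walk_of_adj hk hdx hdy hadj
  have hxS : x ∈ setNbhd G A := by
    by_contra hxS
    exact hadj (hD x (fun h => h.elim hxA hxS) y hyA hxy.symm)
  have hyS : y ∈ setNbhd G A := by
    by_contra hyS
    exact hadj (hD y (fun h => h.elim hyA hyS) x hxA hxy).symm
  obtain ⟨P, hP, hPA⟩ := exists_isInducedPath_of_mem_setNbhd hA hxS hyS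
  have hint : ∀ u ∈ P.support, u ≠ x → u ≠ y → u ≠ d ∧ ¬G.Adj d u := fun u hu hux huy => by
    have huA : u ∈ A := ((hPA u hu).resolve_left hux).resolve_left huy
    exact ⟨fun h => hd (Or.inl (h ▸ huA)), fun h => not_adj_of_notMem_closedNbhd hd huA h.symm⟩
  exact ⟨P, fun hdP => (hint d hdP hdx.ne hdy.ne).1 rfl,
    hch.length_le_of_isInducedPath hdx hdy hadj hxy hP hint⟩

universe u

lemma KChordal.exists_simpC1_notMem_closedNbhd (hk : 3 ≤ k) (n : ℕ) :
    ∀ {W : Type u} [Finite W] {G : SimpleGraph W}, Nat.card W < n → KChordal G k →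
      ∀ {A : Set W}, ConnNonDom G A → ∃ v ∉ closedNbhd G A, SimpC1 G k v := by
  induction n with
  | zero => exact fun h => absurd h (Nat.not_lt_zero _)
  | succ n ih =>
    intro W _ G hcard hch A hA
    obtain ⟨B, hAB, hB⟩ := hA.exists_maxConnNonDom
    suffices ∃ v ∉ closedNbhd G B, SimpC1 G k v by
      obtain ⟨v, hv, hvC1⟩ := this
      exact ⟨v, fun hvA => hv (closedNbhd_mono hAB hvA), hvC1⟩
    by_cases hD : ∀ d ∉ closedNbhd G B, ∀ u ∉ B, u ≠ d → G.Adj d u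
    · obtain ⟨d, hd⟩ : ∃ d, d ∉ closedNbhd G B := by
        by_contra! h
        exact hB.1.2 (Set.eq_univ_of_forall h)
      exact ⟨d, hd, hch.simpC1_of_forall_adj hk hB.1.1 hD hd⟩
    push Not at hD
    obtain ⟨d, hd, u, huB, hud, hdu⟩ := hD
    have hdB : d ∉ B := fun h => hd (Or.inl h)
    obtain ⟨⟨b, hb⟩⟩ := hB.1.1.nonempty
    have hcard' : Nat.card (Bᶜ : Set W) < n :=
      (Finite.card_subtype_lt (x := b) (not_not.mpr hb)).trans_le (Nat.le_of_lt_succ hcard)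
    obtain ⟨v, hv, hvC1⟩ := ih hcard' (hch.induce Bᶜ)
      (connNonDom_singleton (G := G.induce Bᶜ) (d := ⟨d, hdB⟩) (u := ⟨u, huB⟩)
        (fun h => hud (congrArg Subtype.val h)) hdu)
    have hvB : (v : W) ∉ closedNbhd G B := by
      rintro (hvB | hvS)
      · exact v.2 hvB
      · by_cases hvd : v = ⟨d, hdB⟩
        · exact hv (Or.inl hvd)
        · exact hv (Or.inr ⟨hvd, _, rfl, (hB.adj hvS hd).symm⟩)
    exact ⟨v, hvB, hvC1.of_induce fun x hvx hxB => not_adj_of_notMem_closedNbhd hvB hxB hvx.symm⟩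

lemma KChordal.exists_kSimplicial [Finite V] [Nonempty V] {G : SimpleGraph V} (hk : 3 ≤ k)
    (hch : KChordal G k) : ∃ v, KSimplicial G k v := by
  suffices ∃ v, SimpC1 G k v from this.imp fun v hv => ⟨hv, hch.simpC2 v⟩
  by_cases hcomplete : ∀ x y : V, x ≠ y → G.Adj x y
  · obtain ⟨v⟩ := ‹Nonempty V›
    exact ⟨v, simpC1_iff.mpr fun x y hvx hvy hxy =>
      exists_short_walk_of_adj hk hvx hvy (hcomplete x y hxy)⟩
  push Not at hcomplete
  obtain ⟨u, d, hud, hdu⟩ := hcomplete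
  obtain ⟨v, -, hv⟩ := hch.exists_simpC1_notMem_closedNbhd hk (Nat.card V + 1)
    (Nat.lt_succ_self _) (connNonDom_singleton hud fun h => hdu h.symm)
  exact ⟨v, hv⟩

end Existence

section Ordering

lemma exists_fin_enumeration [Finite V] (P : Set V → V → Prop)
    (hP : ∀ s : Set V, s.Nonempty → ∃ v ∈ s, P s v) (n : ℕ) :
    ∀ s : Set V, s.ncard = n →
      ∃ f : Fin n → V, Set.range f = s ∧ ∀ i, P (f '' Set.Ici i) (f i) := by
  induction n with
  | zero =>
    intro s hs
    refine ⟨Fin.elim0, ?_, fun i => i.elim0⟩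
    rw [Set.range_eq_empty, (Set.ncard_eq_zero).mp hs]
  | succ n ih =>
    intro s hs
    obtain ⟨v, hv, hPv⟩ := hP s (Set.nonempty_of_ncard_ne_zero (by omega))
    obtain ⟨f, hf, hPf⟩ := ih (s \ {v}) (by rw [Set.ncard_sdiff_singleton_of_mem hv]; omega)
    have hrange : Set.range (Fin.cons v f : Fin (n + 1) → V) = s := by
      rw [Fin.range_cons, hf, Set.insert_sdiff_singleton, Set.insert_eq_of_mem hv]
    refine ⟨Fin.cons v f, hrange, Fin.cases ?_ fun i => ?_⟩
    · rw [show Set.Ici (0 : Fin (n + 1)) = Set.univ from Set.eq_univ_of_forall Fin.zero_le,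
        Set.image_univ, hrange, Fin.cons_zero]
      exact hPv
    · rw [← Fin.image_succ_Ici, Set.image_image, Fin.cons_succ]
      simpa only [Fin.cons_succ] using hPf i

lemma laterSet_eq_image [Fintype V] (σ : Fin (Fintype.card V) ≃ V) (i : Fin (Fintype.card V)) :
    laterSet σ i = σ '' Set.Ici i := by
  rw [σ.image_eq_preimage_symm]
  rfl

lemma exists_equiv_forall_laterSet [Fintype V] (P : Set V → V → Prop)
    (hP : ∀ s : Set V, s.Nonempty → ∃ v ∈ s, P s v) :
    ∃ σ : Fin (Fintype.card V) ≃ V, ∀ i, P (laterSet σ i) (σ i) := by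
  obtain ⟨f, hf, hPf⟩ := exists_fin_enumeration P hP _ Set.univ
    (by rw [Set.ncard_univ, Nat.card_eq_fintype_card])
  have hbij : f.Bijective :=
    (Fintype.bijective_iff_surjective_and_card f).mpr ⟨Set.range_eq_univ.mp hf, by simp⟩
  refine ⟨.ofBijective f hbij, fun i => ?_⟩
  rw [laterSet_eq_image]
  exact hPf i

end Ordering

theorem stmt9 [Fintype V] (G : SimpleGraph V) (k : ℕ) (hk : 3 ≤ k)
    (hch : KChordal G k) :
    ∃ σ : Fin (Fintype.card V) ≃ V, KSimplicialOrdering G k σ := by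
  obtain ⟨σ, hσ⟩ := exists_equiv_forall_laterSet
    (fun s v => ∃ hv : v ∈ s, KSimplicial (G.induce s) k ⟨v, hv⟩) fun s hs => by
      have : Nonempty s := hs.to_subtype
      obtain ⟨v, hv⟩ := (hch.induce s).exists_kSimplicial hk
      exact ⟨v, v.2, v.2, hv⟩
  exact ⟨σ, fun i => (hσ i).2⟩
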